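/- An instance of the minimum spanning tree problem with edge costs c : E → ℝ on a connected graph G has the property that every spanning tree has the same total cost if and only if all edges belonging to the same biconnected component of G have equal cost. -/

import Mathlib

open Finset

/-- `T` (a finite set of edges) is a spanning tree of the simple graph `G`. -/
def IsSpanningTree {V : Type*} (G : SimpleGraph V) (T : Finset (Sym2 V)) : Prop :=
  ↑T ⊆ G.edgeSet ∧ (SimpleGraph.fromEdgeSet (↑T : Set (Sym2 V))).IsTree

/-- Quadratic cost of a spanning tree: `Q(T) = ∑_{e∈T} ∑_{f∈T} q(e,f)`. -/
noncomputable def treeCost {V : Type*} (Q : Sym2 V → Sym2 V → ℝ) (T : Finset (Sym2 V)) : ℝ :=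
  ∑ e ∈ T, ∑ f ∈ T, Q e f

/-- `c` is a linearization of `Q` on `G`. -/
def IsLinearization {V : Type*} (G : SimpleGraph V) (Q : Sym2 V → Sym2 V → ℝ)
    (c : Sym2 V → ℝ) : Prop :=
  ∀ T : Finset (Sym2 V), IsSpanningTree G T → treeCost Q T = ∑ e ∈ T, c e

/-- `Q` is linearizable on `G`. -/
def Linearizable {V : Type*} (G : SimpleGraph V) (Q : Sym2 V → Sym2 V → ℝ) : Prop :=
  ∃ c : Sym2 V → ℝ, IsLinearization G Q c


/-- Two edges lie on a common cycle of `G`; for distinct edges this means they belong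
to the same biconnected component of `G`. -/
def OnCommonCycle {V : Type*} (G : SimpleGraph V) (e f : Sym2 V) : Prop :=
  ∃ (u : V) (w : G.Walk u u), w.IsCycle ∧ e ∈ w.edges ∧ f ∈ w.edges

/-
Spanning trees of a finite connected graph are linked by exchanges: if `T` is a spanning tree,
`e ∉ T` an edge and `f` an edge of the cycle that `e` closes in `T`, then `T + e - f` is again a
spanning tree, and `e`, `f` lie on a common cycle. When costs agree on common cycles, a sequence
of such exchanges turns any spanning tree into any other without changing the cost. Conversely,
if `e ≠ f` lie on a cycle `C`, then `C - e` is a path through `f`; extending it to a spanning tree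
`T` makes `e` close exactly the cycle `C` in `T`, so `T` and `T + e - f` cost the same, i.e.
`c e = c f`.
-/

section

open SimpleGraph Walk

variable {V : Type*} {G : SimpleGraph V}

namespace SimpleGraph.Walk

variable {u v : V}

theorem IsCycle.exists_cons_of_mem_edges {c : G.Walk u u} (hc : c.IsCycle) {x y : V}
    (he : s(x, y) ∈ c.edges) :
    ∃ (h : G.Adj x y) (p : G.Walk y x), (cons h p).IsCycle ∧
      ∀ g, g ∈ (cons h p).edges ↔ g ∈ c.edges := by
  classical
  have hx := c.fst_mem_support_of_mem_edges he
  have hrot : ∀ g, g ∈ (c.rotate x hx).edges ↔ g ∈ c.edges :=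
    fun g => (c.rotate_edges x hx).mem_iff
  have of_snd : ∀ d : G.Walk x x, d.IsCycle → d.snd = y →
      (∀ g, g ∈ d.edges ↔ g ∈ c.edges) →
      ∃ (h : G.Adj x y) (p : G.Walk y x), (cons h p).IsCycle ∧
        ∀ g, g ∈ (cons h p).edges ↔ g ∈ c.edges := by
    rintro (_ | ⟨h, p⟩) hd hy hdc
    · exact absurd hd not_isCycle_nil
    · rw [snd_cons] at hy
      subst hy
      exact ⟨h, p, hd, hdc⟩
  -- `x` has exactly two neighbours on the cycle: its successor and its predecessor.
  have hy : y ∈ (c.rotate x hx).toSubgraph.neighborSet x :=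
    adj_toSubgraph_iff_mem_edges.mpr ((hrot _).mpr he)
  rw [(hc.rotate hx).neighborSet_toSubgraph_endpoint] at hy
  rcases hy with hy | hy
  · exact of_snd _ (hc.rotate hx) hy.symm hrot
  · exact of_snd _ (hc.rotate hx).reverse (by rw [snd_reverse, hy])
      (by simpa [edges_reverse] using hrot)

theorem IsPath.isAcyclic_fromEdgeSet {p : G.Walk u v} (hp : p.IsPath) :
    (fromEdgeSet {g | g ∈ p.edges}).IsAcyclic := by
  induction p with
  | nil => simp
  | @cons a b _ h q ih =>
    rw [cons_isPath_iff] at hp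
    have hsplit : {g | g ∈ (cons h q).edges} = {g | g ∈ q.edges} ∪ {s(a, b)} := by
      ext; simp
    rw [hsplit, fromEdgeSet_union]
    refine (ih hp.1).sup_edge_of_not_reachable ?_
    -- `a` is isolated in the graph of the edges of `q`, as it is not on `q`.
    rintro ⟨r⟩
    cases r with
    | nil => exact h.ne rfl
    | cons ha _ => exact hp.2 (q.fst_mem_support_of_mem_edges ((fromEdgeSet_adj _).mp ha).1)

theorem forall_mem_edgeSet_fromEdgeSet {w : G.Walk u v} {s : Set (Sym2 V)}
    (hw : ∀ g ∈ w.edges, g ∈ s) : ∀ g ∈ w.edges, g ∈ (fromEdgeSet s).edgeSet := by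
  intro g hg
  rw [edgeSet_fromEdgeSet]
  exact ⟨hw g hg, G.not_isDiag_of_mem_edgeSet (w.edges_subset_edgeSet hg)⟩

theorem IsCycle.exists_mem_edges_notMem {w : G.Walk u u} (hw : w.IsCycle) {s : Set (Sym2 V)}
    (hs : (fromEdgeSet s).IsAcyclic) : ∃ g ∈ w.edges, g ∉ s := by
  by_contra! hsub
  have hws := forall_mem_edgeSet_fromEdgeSet hsub
  exact hs (w.transfer _ hws) (hw.transfer hws)

end SimpleGraph.Walk

theorem edgeSet_fromEdgeSet_of_subset {s : Set (Sym2 V)} (hs : s ⊆ G.edgeSet) :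
    (fromEdgeSet s).edgeSet = s := by
  rw [edgeSet_fromEdgeSet, sdiff_eq_left, Set.disjoint_left]
  exact fun g hg => G.not_isDiag_of_mem_edgeSet (hs hg)

theorem isSpanningTree_iff [Finite V] {T : Finset (Sym2 V)} :
    IsSpanningTree G T ↔
      ↑T ⊆ G.edgeSet ∧ (fromEdgeSet (↑T : Set (Sym2 V))).Connected ∧
        #T + 1 = Nat.card V := by
  refine and_congr_right fun hT => ?_
  rw [isTree_iff_connected_and_card, edgeSet_fromEdgeSet_of_subset hT, Nat.card_coe_set_eq,
    Set.ncard_coe_finset]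

theorem exists_isSpanningTree_superset [Finite V] (hconn : G.Connected) {s : Set (Sym2 V)}
    (hs : s ⊆ G.edgeSet) (hacyc : (fromEdgeSet s).IsAcyclic) :
    ∃ T : Finset (Sym2 V), IsSpanningTree G T ∧ s ⊆ ↑T := by
  obtain ⟨F, hsF, hFG, hF⟩ :=
    hconn.exists_isTree_le_of_le_of_isAcyclic
      ((fromEdgeSet_le G).mpr (Set.sdiff_subset.trans hs)) hacyc
  refine ⟨F.edgeSet.toFinite.toFinset, ⟨?_, ?_⟩, ?_⟩ <;> rw [Set.Finite.coe_toFinset]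
  · exact edgeSet_mono hFG
  · rwa [fromEdgeSet_edgeSet]
  · exact edgeSet_fromEdgeSet_of_subset hs ▸ edgeSet_mono hsF

namespace IsSpanningTree

variable {T : Finset (Sym2 V)}

theorem eq_of_subset [Finite V] {T' : Finset (Sym2 V)} (hT : IsSpanningTree G T)
    (hT' : IsSpanningTree G T') (hsub : T ⊆ T') : T = T' :=
  Finset.eq_of_subset_of_card_le hsub <| by
    have := (isSpanningTree_iff.mp hT).2.2
    have := (isSpanningTree_iff.mp hT').2.2
    omega

theorem exists_isPath (hT : IsSpanningTree G T) (x y : V) :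
    ∃ p : G.Walk x y, p.IsPath ∧ ∀ g ∈ p.edges, g ∈ T := by
  have hle : fromEdgeSet (↑T : Set (Sym2 V)) ≤ G :=
    (fromEdgeSet_le G).mpr (Set.sdiff_subset.trans hT.1)
  obtain ⟨q, hq⟩ := hT.2.connected.exists_isPath x y
  refine ⟨q.mapLe hle, hq.mapLe hle, fun g hg => ?_⟩
  rw [edges_mapLe_eq_edges] at hg
  have := q.edges_subset_edgeSet hg
  rw [edgeSet_fromEdgeSet] at this
  exact this.1

theorem exchange [Finite V] [DecidableEq V] (hT : IsSpanningTree G T) {x y : V} (h : G.Adj x y)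
    {p : G.Walk y x} (hp : p.IsPath) (hpT : ∀ g ∈ p.edges, g ∈ T) (heT : s(x, y) ∉ T)
    {f : Sym2 V} (hf : f ∈ p.edges) : IsSpanningTree G (insert s(x, y) (T.erase f)) := by
  obtain ⟨hTG, hTconn, hTcard⟩ := isSpanningTree_iff.mp hT
  set K := fromEdgeSet (insert s(x, y) (↑T : Set (Sym2 V)))
  have hcyc : (cons h p).IsCycle :=
    (cons_isCycle_iff p h).mpr ⟨hp, fun hmem => heT (hpT _ hmem)⟩
  have hcycK : ∀ g ∈ (cons h p).edges, g ∈ K.edgeSet :=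
    forall_mem_edgeSet_fromEdgeSet fun g hg => by
      rcases List.mem_cons.mp (edges_cons h p ▸ hg) with rfl | hg
      · exact Set.mem_insert _ _
      · exact Set.mem_insert_of_mem _ (hpT g hg)
  have hfT : f ∈ T := hpT f hf
  have hfe : f ≠ s(x, y) := fun hfe => heT (hfe ▸ hfT)
  have hK : (K.deleteEdges {f}).Connected := by
    obtain ⟨a, b⟩ := f
    have hKconn : K.Connected := hTconn.mono (fromEdgeSet_mono (Set.subset_insert _ _))
    refine hKconn.connected_delete_edge_of_not_isBridge fun hbr =>
      hbr.notMem_edges_of_isCycle (hcyc.transfer hcycK) ?_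
    rw [edges_transfer]
    exact List.mem_cons_of_mem _ hf
  refine isSpanningTree_iff.mpr ⟨?_, ?_, ?_⟩
  · rw [Finset.coe_insert, Finset.coe_erase]
    exact Set.insert_subset h (Set.sdiff_subset.trans hTG)
  · rwa [Finset.coe_insert, Finset.coe_erase, Set.insert_sdiff_singleton_comm hfe.symm,
      ← deleteEdges_fromEdgeSet]
  · rw [Finset.card_insert_of_notMem (fun hmem => heT (Finset.mem_of_mem_erase hmem)),
      Finset.card_erase_add_one hfT, hTcard]

theorem exists_exchange [Finite V] [DecidableEq V] {T' : Finset (Sym2 V)}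
    (hT : IsSpanningTree G T) (hT' : IsSpanningTree G T') {e : Sym2 V} (heT : e ∈ T)
    (heT' : e ∉ T') :
    ∃ f ∈ T', f ∉ T ∧ OnCommonCycle G e f ∧ IsSpanningTree G (insert e (T'.erase f)) := by
  obtain ⟨x, y⟩ := e
  have h : G.Adj x y := hT.1 heT
  obtain ⟨p, hp, hpT'⟩ := hT'.exists_isPath y x
  have hcyc : (cons h p).IsCycle :=
    (cons_isCycle_iff p h).mpr ⟨hp, fun hmem => heT' (hpT' _ hmem)⟩
  obtain ⟨f, hf, hfT⟩ := hcyc.exists_mem_edges_notMem hT.2.isAcyclic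
  have hfp : f ∈ p.edges := by
    rcases List.mem_cons.mp (edges_cons h p ▸ hf) with rfl | hfp
    · exact absurd heT hfT
    · exact hfp
  exact ⟨f, hpT' f hfp, hfT, ⟨x, cons h p, hcyc, by simp, hf⟩,
    hT'.exchange h hp hpT' heT' hfp⟩

end IsSpanningTree

theorem sum_eq_of_isSpanningTree [Finite V] [DecidableEq V] {c : Sym2 V → ℝ}
    (hc : ∀ e f, OnCommonCycle G e f → c e = c f) {T₁ T₂ : Finset (Sym2 V)}
    (hT₁ : IsSpanningTree G T₁) (hT₂ : IsSpanningTree G T₂) :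
    ∑ e ∈ T₁, c e = ∑ e ∈ T₂, c e := by
  induction hn : #(T₁ \ T₂) generalizing T₂ with
  | zero =>
    rw [hT₁.eq_of_subset hT₂ (Finset.sdiff_eq_empty_iff_subset.mp (Finset.card_eq_zero.mp hn))]
  | succ n ih =>
    obtain ⟨e, he⟩ : (T₁ \ T₂).Nonempty := Finset.card_pos.mp (by omega)
    obtain ⟨heT₁, heT₂⟩ := Finset.mem_sdiff.mp he
    obtain ⟨f, hfT₂, hfT₁, hef, hT₂'⟩ := hT₁.exists_exchange hT₂ heT₁ heT₂
    have hdiff : T₁ \ insert e (T₂.erase f) = (T₁ \ T₂).erase e := by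
      ext g
      simp only [Finset.mem_sdiff, Finset.mem_insert, Finset.mem_erase]
      by_cases hgf : g = f
      · subst hgf; tauto
      · tauto
    calc ∑ g ∈ T₁, c g = ∑ g ∈ insert e (T₂.erase f), c g :=
          ih hT₂' (by rw [hdiff, Finset.card_erase_of_mem he, hn]; rfl)
      _ = c f + ∑ g ∈ T₂.erase f, c g := by
          rw [Finset.sum_insert (fun hmem => heT₂ (Finset.mem_of_mem_erase hmem)), hc e f hef]
      _ = ∑ g ∈ T₂, c g := Finset.add_sum_erase _ _ hfT₂

theorem eq_of_onCommonCycle [Finite V] [DecidableEq V] (hconn : G.Connected) {c : Sym2 V → ℝ}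
    (hsum : ∀ T₁ T₂ : Finset (Sym2 V), IsSpanningTree G T₁ → IsSpanningTree G T₂ →
      ∑ e ∈ T₁, c e = ∑ e ∈ T₂, c e)
    {e f : Sym2 V} (hef : OnCommonCycle G e f) : c e = c f := by
  by_cases he_f : e = f
  · rw [he_f]
  obtain ⟨u, w, hw, he, hf⟩ := hef
  obtain ⟨x, y⟩ := e
  obtain ⟨h, p, hcyc, hedges⟩ := hw.exists_cons_of_mem_edges he
  obtain ⟨hp, -⟩ := (cons_isCycle_iff p h).mp hcyc
  have hfp : f ∈ p.edges :=
    (List.mem_cons.mp ((hedges f).mpr hf)).resolve_left (Ne.symm he_f)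
  obtain ⟨T, hT, hpT⟩ := exists_isSpanningTree_superset hconn
    (fun g hg => p.edges_subset_edgeSet hg) hp.isAcyclic_fromEdgeSet
  have heT : s(x, y) ∉ T := by
    obtain ⟨g, hg, hgT⟩ := hcyc.exists_mem_edges_notMem hT.2.isAcyclic
    rcases List.mem_cons.mp (edges_cons h p ▸ hg) with rfl | hgp
    · exact hgT
    · exact absurd (hpT hgp) hgT
  have hfT : f ∈ T := hpT hfp
  have hcost := hsum T _ hT (hT.exchange h hp (fun g hg => hpT hg) heT hfp)
  rw [Finset.sum_insert (fun hmem => heT (Finset.mem_of_mem_erase hmem)),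
    ← Finset.add_sum_erase T c hfT] at hcost
  linarith

end

/-- All spanning trees of a connected graph have the same cost iff the edge costs are
constant on every biconnected component (equivalently, any two edges lying on a common
cycle have equal cost). -/
theorem constant_mst_iff_bicomp_constant {V : Type*} [Fintype V] (G : SimpleGraph V)
    (hconn : G.Connected) (c : Sym2 V → ℝ) :
    (∀ T₁ T₂ : Finset (Sym2 V), IsSpanningTree G T₁ → IsSpanningTree G T₂ →
        ∑ e ∈ T₁, c e = ∑ e ∈ T₂, c e) ↔
      (∀ e f : Sym2 V, OnCommonCycle G e f → c e = c f) := by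
  classical
  exact ⟨fun hsum _ _ => eq_of_onCommonCycle hconn hsum,
    fun hc _ _ => sum_eq_of_isSpanningTree hc⟩
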